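/- arXiv:0712.4151 — 3 statements merged into one kernel-verified Lean document; each statement's English description precedes it below -/
import Mathlib

section
/- Let A and B be disjoint cubic graphs with v(A) ≡ 2 (mod 6) and v(B) ≡ 2 (mod 6), let a = a₁a₂ be an edge of A and b = b₁b₂ an edge of B, and let G = Aa|bB with middle edge z = z₁z₂. Then v(G) ≡ 0 (mod 6) and G has no Λ-factor containing the edge z. -/
open SimpleGraph

/-- `p` encodes a 3-vertex path (a `Λ`) in `G`: three distinct vertices, the first
adjacent to the second and the second adjacent to the third. -/
def IsPathL {V : Type*} (G : SimpleGraph V) (p : V × V × V) : Prop :=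
  p.1 ≠ p.2.1 ∧ p.2.1 ≠ p.2.2 ∧ p.1 ≠ p.2.2 ∧ G.Adj p.1 p.2.1 ∧ G.Adj p.2.1 p.2.2

/-- The vertex set of an encoded 3-vertex path. -/
def pVerts {V : Type*} (p : V × V × V) : Set V := {p.1, p.2.1, p.2.2}

/-- The edge set of an encoded 3-vertex path. -/
def pEdges {V : Type*} (p : V × V × V) : Set (Sym2 V) := {s(p.1, p.2.1), s(p.2.1, p.2.2)}

/-- A `Λ`-packing of `G`: a collection of pairwise vertex-disjoint 3-vertex paths of `G`. -/
def IsPacking {V : Type*} (G : SimpleGraph V) (P : Finset (V × V × V)) : Prop :=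
  (∀ p ∈ P, IsPathL G p) ∧
  ∀ p ∈ P, ∀ q ∈ P, p ≠ q → Disjoint (pVerts p) (pVerts q)

/-- A `Λ`-factor of the induced subgraph of `G` on the vertex set `S`:
a `Λ`-packing whose paths lie in `S` and together cover all of `S`. -/
def IsFactorOn {V : Type*} (G : SimpleGraph V) (S : Set V) (P : Finset (V × V × V)) : Prop :=
  IsPacking G P ∧ (∀ p ∈ P, pVerts p ⊆ S) ∧ ∀ v ∈ S, ∃ p ∈ P, v ∈ pVerts p

/-- A `Λ`-factor of `G`. -/
def IsFactor {V : Type*} (G : SimpleGraph V) (P : Finset (V × V × V)) : Prop :=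
  IsFactorOn G Set.univ P

/-- The packing `P` contains the edge `e`. -/
def PContains {V : Type*} (P : Finset (V × V × V)) (e : Sym2 V) : Prop :=
  ∃ p ∈ P, e ∈ pEdges p

/-- `λ(G)`: the maximum number of pairwise disjoint 3-vertex paths in `G`. -/
noncomputable def lambdaNum {V : Type*} (G : SimpleGraph V) [Fintype V] : ℕ :=
  sSup {n | ∃ P : Finset (V × V × V), IsPacking G P ∧ P.card = n}

/-- Every vertex of `G` has degree exactly 3. -/
def IsCubic {V : Type*} (G : SimpleGraph V) : Prop :=
  ∀ v, (G.neighborSet v).ncard = 3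

/-- `G` is `k`-connected: more than `k` vertices, and deleting any set of fewer than
`k` vertices leaves a connected graph. -/
def KConnected {V : Type*} (k : ℕ) (G : SimpleGraph V) [Fintype V] : Prop :=
  k < Fintype.card V ∧ ∀ S : Set V, S.ncard < k → (G.induce Sᶜ).Connected

/-- The graph `AabB`: delete the edge `a = a₁a₂` from `A` and the edge `b = b₁b₂` from
`B`, and add the two edges `a₁b₁` and `a₂b₂`. -/
def edgeGlue {VA VB : Type*} (A : SimpleGraph VA) (B : SimpleGraph VB)
    (a1 a2 : VA) (b1 b2 : VB) : SimpleGraph (VA ⊕ VB) :=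
  SimpleGraph.fromRel fun u v =>
    match u, v with
    | Sum.inl x, Sum.inl y => (A.deleteEdges {s(a1, a2)}).Adj x y
    | Sum.inr x, Sum.inr y => (B.deleteEdges {s(b1, b2)}).Adj x y
    | Sum.inl x, Sum.inr y => (x = a1 ∧ y = b1) ∨ (x = a2 ∧ y = b2)
    | Sum.inr _, Sum.inl _ => False

/-- The graph `Aa|bB`: delete the edge `a = a₁a₂` from `A` and the edge `b = b₁b₂` from
`B`, add two new vertices `z₁, z₂` (the `Fin 2` part, indexed `0, 1`) and the five edges
`a₁z₁, z₁b₁, a₂z₂, z₂b₂, z₁z₂`; `z₁z₂` is the middle edge. -/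
def edgeGlueMid {VA VB : Type*} (A : SimpleGraph VA) (B : SimpleGraph VB)
    (a1 a2 : VA) (b1 b2 : VB) : SimpleGraph ((VA ⊕ VB) ⊕ Fin 2) :=
  SimpleGraph.fromRel fun u v =>
    match u, v with
    | Sum.inl (Sum.inl x), Sum.inl (Sum.inl y) => (A.deleteEdges {s(a1, a2)}).Adj x y
    | Sum.inl (Sum.inr x), Sum.inl (Sum.inr y) => (B.deleteEdges {s(b1, b2)}).Adj x y
    | Sum.inl (Sum.inl x), Sum.inr j => (j = 0 ∧ x = a1) ∨ (j = 1 ∧ x = a2)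
    | Sum.inl (Sum.inr y), Sum.inr j => (j = 0 ∧ y = b1) ∨ (j = 1 ∧ y = b2)
    | Sum.inr j, Sum.inr j' => j = 0 ∧ j' = 1
    | _, _ => False

/-- If `A, B` are cubic with `v(A) ≡ v(B) ≡ 2 (mod 6)` and `a = a₁a₂ ∈ E(A)`,
`b = b₁b₂ ∈ E(B)`, then `G = Aa|bB` satisfies `v(G) ≡ 0 (mod 6)` and has no
`Λ`-factor containing the middle edge `z = z₁z₂`. -/
theorem stmt12 {VA VB : Type*} [Fintype VA] [Fintype VB]
    (A : SimpleGraph VA) (B : SimpleGraph VB) (a1 a2 : VA) (b1 b2 : VB)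
    (hcA : IsCubic A) (hcB : IsCubic B)
    (hmA : Fintype.card VA % 6 = 2) (hmB : Fintype.card VB % 6 = 2)
    (ha : A.Adj a1 a2) (hb : B.Adj b1 b2) :
    Fintype.card ((VA ⊕ VB) ⊕ Fin 2) % 6 = 0 ∧
    ¬ ∃ P, IsFactor (edgeGlueMid A B a1 a2 b1 b2) P ∧
      PContains P s((Sum.inr 0 : (VA ⊕ VB) ⊕ Fin 2), (Sum.inr 1 : (VA ⊕ VB) ⊕ Fin 2)) := by
  
  classical
  constructor
  · simp only [Fintype.card_sum, Fintype.card_fin]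
    omega
  rintro ⟨P, ⟨⟨⟨hpath, hdisj⟩, -, hcov⟩, p0, hp0P, hp0e⟩⟩
  set G := edgeGlueMid A B a1 a2 b1 b2 with hG
  -- no cross edges between the A-side and the B-side
  have hnc : ∀ (x : VA) (y : VB),
      ¬ G.Adj (Sum.inl (Sum.inl x)) (Sum.inl (Sum.inr y)) := by
    intro x y
    simp [hG, edgeGlueMid]
  -- the A-side vertex set of a path
  set Ap : ((VA ⊕ VB) ⊕ Fin 2) × ((VA ⊕ VB) ⊕ Fin 2) × ((VA ⊕ VB) ⊕ Fin 2) → Finset VA :=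
    fun p => Finset.univ.filter
      (fun v : VA => (Sum.inl (Sum.inl v) : (VA ⊕ VB) ⊕ Fin 2) ∈ pVerts p) with hAp
  have hApmem : ∀ p (v : VA),
      v ∈ Ap p ↔ (Sum.inl (Sum.inl v) : (VA ⊕ VB) ⊕ Fin 2) ∈ pVerts p := by
    intro p v; simp [hAp]
  -- two coordinates of p0 are the z-vertices
  have hz : ((p0.1 = Sum.inr 0 ∧ p0.2.1 = Sum.inr 1) ∨
      (p0.1 = Sum.inr 1 ∧ p0.2.1 = Sum.inr 0)) ∨
      ((p0.2.1 = Sum.inr 0 ∧ p0.2.2 = Sum.inr 1) ∨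
      (p0.2.1 = Sum.inr 1 ∧ p0.2.2 = Sum.inr 0)) := by
    unfold pEdges at hp0e
    simp only [Set.mem_insert_iff, Set.mem_singleton_iff, Sym2.eq_iff] at hp0e
    rcases hp0e with (⟨h1, h2⟩ | ⟨h1, h2⟩) | (⟨h1, h2⟩ | ⟨h1, h2⟩)
    · exact Or.inl (Or.inl ⟨h1.symm, h2.symm⟩)
    · exact Or.inl (Or.inr ⟨h2.symm, h1.symm⟩)
    · exact Or.inr (Or.inl ⟨h1.symm, h2.symm⟩)
    · exact Or.inr (Or.inr ⟨h2.symm, h1.symm⟩)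
  have hz1 : (Sum.inr 0 : (VA ⊕ VB) ⊕ Fin 2) ∈ pVerts p0 ∧
      (Sum.inr 1 : (VA ⊕ VB) ⊕ Fin 2) ∈ pVerts p0 := by
    unfold pVerts
    rcases hz with (⟨h1, h2⟩ | ⟨h1, h2⟩) | (⟨h1, h2⟩ | ⟨h1, h2⟩) <;> rw [← h1, ← h2] <;> simp
  -- p0 covers at most one A-vertex
  have hAp0 : (Ap p0).card ≤ 1 := by
    apply Finset.card_le_one.2
    intro w1 hw1 w2 hw2
    rw [hApmem] at hw1 hw2
    unfold pVerts at hw1 hw2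
    rcases hz with (⟨h1, h2⟩ | ⟨h1, h2⟩) | (⟨h1, h2⟩ | ⟨h1, h2⟩) <;>
      simp only [h1, h2, Set.mem_insert_iff, Set.mem_singleton_iff, reduceCtorEq,
        false_or, or_false] at hw1 hw2 <;>
      exact Sum.inl_injective (Sum.inl_injective (hw1.trans hw2.symm))
  -- all other paths cover 0 or 3 A-vertices
  have hAp3 : ∀ p ∈ P, p ≠ p0 → (Ap p).card = 0 ∨ (Ap p).card = 3 := by
    intro p hpP hne
    have hd := hdisj p hpP p0 hp0P hne
    have hnoz : ∀ j : Fin 2, (Sum.inr j : (VA ⊕ VB) ⊕ Fin 2) ∉ pVerts p := by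
      intro j hj
      fin_cases j
      · exact (Set.disjoint_left.1 hd hj) hz1.1
      · exact (Set.disjoint_left.1 hd hj) hz1.2
    have hmem1 : p.1 ∈ pVerts p := by unfold pVerts; simp
    have hmem2 : p.2.1 ∈ pVerts p := by unfold pVerts; simp
    have hmem3 : p.2.2 ∈ pVerts p := by unfold pVerts; simp
    obtain ⟨hne1, hne2, hne3, hadj1, hadj2⟩ := hpath p hpP
    obtain ⟨u1, hu1⟩ : ∃ u, p.1 = Sum.inl u := by
      cases h : p.1 with
      | inl u => exact ⟨u, rfl⟩
      | inr j => exact absurd (h ▸ hmem1) (hnoz j)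
    obtain ⟨u2, hu2⟩ : ∃ u, p.2.1 = Sum.inl u := by
      cases h : p.2.1 with
      | inl u => exact ⟨u, rfl⟩
      | inr j => exact absurd (h ▸ hmem2) (hnoz j)
    obtain ⟨u3, hu3⟩ : ∃ u, p.2.2 = Sum.inl u := by
      cases h : p.2.2 with
      | inl u => exact ⟨u, rfl⟩
      | inr j => exact absurd (h ▸ hmem3) (hnoz j)
    rw [hu1, hu2] at hadj1
    rw [hu2, hu3] at hadj2
    cases u2 with
    | inl x2 =>
      obtain ⟨x1, hx1⟩ : ∃ x, u1 = Sum.inl x := by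
        cases u1 with
        | inl x => exact ⟨x, rfl⟩
        | inr y => exact absurd hadj1.symm (hnc x2 y)
      obtain ⟨x3, hx3⟩ : ∃ x, u3 = Sum.inl x := by
        cases u3 with
        | inl x => exact ⟨x, rfl⟩
        | inr y => exact absurd hadj2 (hnc x2 y)
      right
      have hset : Ap p = {x1, x2, x3} := by
        ext v
        rw [hApmem]
        unfold pVerts
        rw [hu1, hu2, hu3, hx1, hx3]
        simp only [Set.mem_insert_iff, Set.mem_singleton_iff, Finset.mem_insert,
          Finset.mem_singleton, Sum.inl.injEq]
      rw [hset]
      rw [hu1, hx1] at hne1 hne3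
      rw [hu2] at hne1 hne2
      rw [hu3, hx3] at hne2 hne3
      have h12 : x1 ≠ x2 := fun h => hne1 (by rw [h])
      have h23 : x2 ≠ x3 := fun h => hne2 (by rw [h])
      have h13 : x1 ≠ x3 := fun h => hne3 (by rw [h])
      rw [Finset.card_insert_of_notMem (by simp [h12, h13]),
          Finset.card_insert_of_notMem (by simp [h23])]
      simp
    | inr y2 =>
      left
      rw [Finset.card_eq_zero]
      ext v
      simp only [Finset.notMem_empty, iff_false]
      rw [hApmem]
      unfold pVerts
      rw [hu1, hu2, hu3]
      intro h
      simp only [Set.mem_insert_iff, Set.mem_singleton_iff, Sum.inl.injEq] at h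
      rcases h with h | h | h
      · rw [← h] at hadj1
        exact hnc v y2 hadj1
      · exact absurd h (by simp)
      · rw [← h] at hadj2
        exact hnc v y2 hadj2.symm
  -- the A-side vertex sets partition VA
  have hunion : (Finset.univ : Finset VA) = P.biUnion Ap := by
    ext v
    simp only [Finset.mem_univ, true_iff, Finset.mem_biUnion]
    obtain ⟨p, hpP, hv⟩ := hcov (Sum.inl (Sum.inl v)) (Set.mem_univ _)
    exact ⟨p, hpP, (hApmem p v).2 hv⟩
  have hcard : Fintype.card VA = ∑ p ∈ P, (Ap p).card := by
    rw [← Finset.card_univ, hunion]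
    apply Finset.card_biUnion
    intro p hp q hq hpq
    rw [Function.onFun, Finset.disjoint_left]
    intro v hvp hvq
    exact Set.disjoint_left.1 (hdisj p hp q hq hpq) ((hApmem p v).1 hvp) ((hApmem q v).1 hvq)
  rw [← Finset.add_sum_erase _ _ hp0P] at hcard
  have hdvd : 3 ∣ ∑ p ∈ P.erase p0, (Ap p).card := by
    apply Finset.dvd_sum
    intro p hp
    rcases hAp3 p (Finset.mem_of_mem_erase hp) (Finset.ne_of_mem_erase hp) with h | h <;>
      rw [h] <;> norm_num
  obtain ⟨m, hm⟩ := hdvd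
  omega
end

section
/- Let A and B be disjoint cubic graphs with v(A) ≡ 0 (mod 6) and v(B) ≡ 4 (mod 6), let a = a₁a₂ be an edge of A, b = b₁b₂ an edge of B, and x a vertex of B not incident to b. Suppose that A has no Λ-factor containing the edge a, and that B − x has no Λ-factor avoiding the edge b. Let G = AabB. Then v(G) ≡ 4 (mod 6) and G − x has no Λ-factor. -/
open SimpleGraph

section AuxStmt15

open SimpleGraph Sum
open scoped Classical

variable {VA VB : Type*}

lemma glue_ll (A : SimpleGraph VA) (B : SimpleGraph VB) (a1 a2 : VA) (b1 b2 : VB) {u v : VA} :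
    (edgeGlue A B a1 a2 b1 b2).Adj (inl u) (inl v) ↔ (A.deleteEdges {s(a1,a2)}).Adj u v := by
  simp only [edgeGlue, fromRel_adj]
  constructor
  · rintro ⟨h, h1 | h1⟩ <;> [exact h1; exact h1.symm]
  · intro h; exact ⟨by simp [h.ne], Or.inl h⟩

lemma glue_rr (A : SimpleGraph VA) (B : SimpleGraph VB) (a1 a2 : VA) (b1 b2 : VB) {u v : VB} :
    (edgeGlue A B a1 a2 b1 b2).Adj (inr u) (inr v) ↔ (B.deleteEdges {s(b1,b2)}).Adj u v := by
  simp only [edgeGlue, fromRel_adj]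
  constructor
  · rintro ⟨h, h1 | h1⟩ <;> [exact h1; exact h1.symm]
  · intro h; exact ⟨by simp [h.ne], Or.inl h⟩

lemma glue_lr (A : SimpleGraph VA) (B : SimpleGraph VB) (a1 a2 : VA) (b1 b2 : VB) {u : VA} {v : VB} :
    (edgeGlue A B a1 a2 b1 b2).Adj (inl u) (inr v) ↔ ((u = a1 ∧ v = b1) ∨ (u = a2 ∧ v = b2)) := by
  simp only [edgeGlue, fromRel_adj]
  constructor
  · rintro ⟨h, h1 | h1⟩ <;> [exact h1; exact h1.elim]
  · intro h; exact ⟨by simp, Or.inl h⟩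

lemma glue_rl (A : SimpleGraph VA) (B : SimpleGraph VB) (a1 a2 : VA) (b1 b2 : VB) {u : VB} {v : VA} :
    (edgeGlue A B a1 a2 b1 b2).Adj (inr u) (inl v) ↔ ((v = a1 ∧ u = b1) ∨ (v = a2 ∧ u = b2)) := by
  rw [adj_comm]; exact glue_lr A B a1 a2 b1 b2

lemma del_ne {V : Type*} {A : SimpleGraph V} {a1 a2 u : V}
    (h : (A.deleteEdges {s(a1,a2)}).Adj u a1) : u ≠ a1 ∧ u ≠ a2 := by
  rw [SimpleGraph.deleteEdges_adj] at h
  refine ⟨h.1.ne, ?_⟩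
  rintro rfl
  exact h.2 (by rw [Sym2.eq_swap]; rfl)

lemma del_ne' {V : Type*} {A : SimpleGraph V} {a1 a2 u : V}
    (h : (A.deleteEdges {s(a1,a2)}).Adj u a2) : u ≠ a1 ∧ u ≠ a2 := by
  rw [SimpleGraph.deleteEdges_adj] at h
  refine ⟨?_, h.1.ne⟩
  rintro rfl
  exact h.2 rfl

lemma struct (A : SimpleGraph VA) (B : SimpleGraph VB) (a1 a2 : VA) (b1 b2 : VB)
    (haa : a1 ≠ a2) (hbb : b1 ≠ b2)
    (p : (VA ⊕ VB) × (VA ⊕ VB) × (VA ⊕ VB))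
    (hp : IsPathL (edgeGlue A B a1 a2 b1 b2) p) :
    (∃ u v w : VA, p = (inl u, inl v, inl w) ∧ IsPathL (A.deleteEdges {s(a1,a2)}) (u, v, w)) ∨
    (∃ u v w : VB, p = (inr u, inr v, inr w) ∧ IsPathL (B.deleteEdges {s(b1,b2)}) (u, v, w)) ∨
    (∃ u : VA, u ≠ a1 ∧ u ≠ a2 ∧ (A.deleteEdges {s(a1,a2)}).Adj u a1 ∧ pVerts p = {inl u, inl a1, inr b1}) ∨
    (∃ u : VA, u ≠ a1 ∧ u ≠ a2 ∧ (A.deleteEdges {s(a1,a2)}).Adj u a2 ∧ pVerts p = {inl u, inl a2, inr b2}) ∨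
    (∃ w : VB, (B.deleteEdges {s(b1,b2)}).Adj b1 w ∧ pVerts p = {inl a1, inr b1, inr w}) ∨
    (∃ w : VB, (B.deleteEdges {s(b1,b2)}).Adj b2 w ∧ pVerts p = {inl a2, inr b2, inr w}) := by
  obtain ⟨v1, v2, v3⟩ := p
  obtain ⟨h12, h23, h13, e12, e23⟩ := hp
  simp only at h12 h23 h13 e12 e23
  rcases v1 with u1 | w1 <;> rcases v2 with u2 | w2 <;> rcases v3 with u3 | w3
  · rw [glue_ll] at e12 e23
    exact Or.inl ⟨u1, u2, u3, rfl, by simpa using h12, by simpa using h23, by simpa using h13, e12, e23⟩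
  · rw [glue_ll] at e12; rw [glue_lr] at e23
    rcases e23 with ⟨rfl, rfl⟩ | ⟨rfl, rfl⟩
    · exact Or.inr (Or.inr (Or.inl ⟨u1, (del_ne e12).1, (del_ne e12).2, e12, rfl⟩))
    · exact Or.inr (Or.inr (Or.inr (Or.inl ⟨u1, (del_ne' e12).1, (del_ne' e12).2, e12, rfl⟩)))
  · rw [glue_lr] at e12; rw [glue_rl] at e23
    rcases e12 with ⟨rfl, rfl⟩ | ⟨rfl, rfl⟩ <;> rcases e23 with ⟨rfl, h⟩ | ⟨rfl, h⟩ <;>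
      simp_all
  · rw [glue_lr] at e12; rw [glue_rr] at e23
    rcases e12 with ⟨rfl, rfl⟩ | ⟨rfl, rfl⟩
    · exact Or.inr (Or.inr (Or.inr (Or.inr (Or.inl ⟨w3, e23, rfl⟩))))
    · exact Or.inr (Or.inr (Or.inr (Or.inr (Or.inr ⟨w3, e23, rfl⟩))))
  · rw [glue_rl] at e12; rw [glue_ll] at e23
    rcases e12 with ⟨rfl, rfl⟩ | ⟨rfl, rfl⟩
    · refine Or.inr (Or.inr (Or.inl ⟨u3, (del_ne e23.symm).1, (del_ne e23.symm).2, e23.symm, ?_⟩))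
      ext z; simp [pVerts]; tauto
    · refine Or.inr (Or.inr (Or.inr (Or.inl ⟨u3, (del_ne' e23.symm).1, (del_ne' e23.symm).2, e23.symm, ?_⟩)))
      ext z; simp [pVerts]; tauto
  · rw [glue_rl] at e12; rw [glue_lr] at e23
    rcases e12 with ⟨rfl, rfl⟩ | ⟨rfl, rfl⟩ <;> rcases e23 with ⟨h, rfl⟩ | ⟨h, rfl⟩ <;>
      simp_all
  · rw [glue_rr] at e12; rw [glue_rl] at e23
    rcases e23 with ⟨rfl, rfl⟩ | ⟨rfl, rfl⟩
    · refine Or.inr (Or.inr (Or.inr (Or.inr (Or.inl ⟨w1, e12.symm, ?_⟩))))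
      ext z; simp [pVerts]; tauto
    · refine Or.inr (Or.inr (Or.inr (Or.inr (Or.inr ⟨w1, e12.symm, ?_⟩))))
      ext z; simp [pVerts]; tauto
  · rw [glue_rr] at e12 e23
    exact Or.inr (Or.inl ⟨w1, w2, w3, rfl, by simpa using h12, by simpa using h23, by simpa using h13, e12, e23⟩)

noncomputable def Apf {VA VB : Type*} [Fintype VA] (p : (VA ⊕ VB) × (VA ⊕ VB) × (VA ⊕ VB)) :
    Finset VA := Finset.univ.filter fun v => Sum.inl v ∈ pVerts p

def toA {VA VB : Type*} (d : VA) (p : (VA ⊕ VB) × (VA ⊕ VB) × (VA ⊕ VB)) : VA × VA × VA :=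
  (Sum.elim id (fun _ => d) p.1, Sum.elim id (fun _ => d) p.2.1, Sum.elim id (fun _ => d) p.2.2)

def toB {VA VB : Type*} (d : VB) (p : (VA ⊕ VB) × (VA ⊕ VB) × (VA ⊕ VB)) : VB × VB × VB :=
  (Sum.elim (fun _ => d) id p.1, Sum.elim (fun _ => d) id p.2.1, Sum.elim (fun _ => d) id p.2.2)

section ApfLemmas
variable [Fintype VA]

lemma Apf_pureA {u v w : VA} :
    Apf ((inl u, inl v, inl w) : (VA ⊕ VB) × (VA ⊕ VB) × (VA ⊕ VB)) = {u, v, w} := by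
  ext z; simp [Apf, pVerts]

lemma Apf_pureB {u v w : VB} :
    Apf ((inr u, inr v, inr w) : (VA ⊕ VB) × (VA ⊕ VB) × (VA ⊕ VB)) = ∅ := by
  ext z; simp [Apf, pVerts]

lemma Apf_two {p : (VA ⊕ VB) × (VA ⊕ VB) × (VA ⊕ VB)} {u c : VA} {e : VB}
    (h : pVerts p = {inl u, inl c, inr e}) : Apf p = {u, c} := by
  ext z; simp [Apf, h]

lemma Apf_one {p : (VA ⊕ VB) × (VA ⊕ VB) × (VA ⊕ VB)} {c : VA} {e f : VB}
    (h : pVerts p = {inl c, inr e, inr f}) : Apf p = {c} := by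
  ext z; simp [Apf, h]

end ApfLemmas

end AuxStmt15

open Sum

/-- If `A, B` are cubic, `v(A) ≡ 0 (mod 6)`, `v(B) ≡ 4 (mod 6)`, `A` has no `Λ`-factor
containing `a = a₁a₂`, `x ∈ V(B)` is not incident to `b = b₁b₂`, and `B − x` has no
`Λ`-factor avoiding `b`, then `G = AabB` satisfies `v(G) ≡ 4 (mod 6)` and `G − x` has
no `Λ`-factor. -/
theorem stmt15 {VA VB : Type*} [Fintype VA] [Fintype VB]
    (A : SimpleGraph VA) (B : SimpleGraph VB) (a1 a2 : VA) (b1 b2 : VB) (x : VB)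
    (hcA : IsCubic A) (hcB : IsCubic B)
    (hmA : Fintype.card VA % 6 = 0) (hmB : Fintype.card VB % 6 = 4)
    (ha : A.Adj a1 a2) (hb : B.Adj b1 b2)
    (hx1 : x ≠ b1) (hx2 : x ≠ b2)
    (hA : ¬ ∃ P, IsFactor A P ∧ PContains P s(a1, a2))
    (hB : ∀ P, IsFactorOn B ({x} : Set VB)ᶜ P → PContains P s(b1, b2)) :
    Fintype.card (VA ⊕ VB) % 6 = 4 ∧
    ¬ ∃ P, IsFactorOn (edgeGlue A B a1 a2 b1 b2)
      ({(Sum.inr x : VA ⊕ VB)}ᶜ : Set (VA ⊕ VB)) P := by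
  classical
  have haa : a1 ≠ a2 := ha.ne
  have hbb : b1 ≠ b2 := hb.ne
  refine ⟨by rw [Fintype.card_sum]; omega, ?_⟩
  rintro ⟨P, ⟨⟨hpath, hdisj⟩, hsub, hcov⟩⟩
  have hcov' : ∀ v : VA ⊕ VB, v ≠ Sum.inr x → ∃ p ∈ P, v ∈ pVerts p := by
    intro v hv; exact hcov v (by simp [hv])
  set Pc := P.filter (fun p => (¬ ∃ u v w : VA, p = (inl u, inl v, inl w)) ∧
      (¬ ∃ u v w : VB, p = (inr u, inr v, inr w))) with hPcdef
  have hPcP : ∀ p ∈ Pc, p ∈ P := fun p hp => Finset.mem_of_mem_filter p hp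
  have hstruct := fun p hp => struct A B a1 a2 b1 b2 haa hbb p (hpath p hp)
  -- classification of crossing paths
  have hcstruct : ∀ p ∈ Pc,
      (((∃ u : VA, u ≠ a1 ∧ u ≠ a2 ∧ (A.deleteEdges {s(a1,a2)}).Adj u a1 ∧
          pVerts p = {inl u, inl a1, inr b1}) ∨
        (∃ u : VA, u ≠ a1 ∧ u ≠ a2 ∧ (A.deleteEdges {s(a1,a2)}).Adj u a2 ∧
          pVerts p = {inl u, inl a2, inr b2})) ∧ (Apf p).card = 2) ∨
      (((∃ w : VB, (B.deleteEdges {s(b1,b2)}).Adj b1 w ∧ pVerts p = {inl a1, inr b1, inr w}) ∨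
        (∃ w : VB, (B.deleteEdges {s(b1,b2)}).Adj b2 w ∧ pVerts p = {inl a2, inr b2, inr w})) ∧
        (Apf p).card = 1) := by
    intro p hp
    obtain ⟨hpP, hnA, hnB⟩ := Finset.mem_filter.1 hp
    rcases hstruct p hpP with ⟨u,v,w,rfl,-⟩ | ⟨u,v,w,rfl,-⟩ | ⟨u,h1,h2,h3,h4⟩ |
      ⟨u,h1,h2,h3,h4⟩ | ⟨w,h1,h2⟩ | ⟨w,h1,h2⟩
    · exact absurd ⟨u,v,w,rfl⟩ hnA
    · exact absurd ⟨u,v,w,rfl⟩ hnB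
    · exact Or.inl ⟨Or.inl ⟨u,h1,h2,h3,h4⟩, by rw [Apf_two h4]; exact Finset.card_pair h1⟩
    · exact Or.inl ⟨Or.inr ⟨u,h1,h2,h3,h4⟩, by rw [Apf_two h4]; exact Finset.card_pair h2⟩
    · exact Or.inr ⟨Or.inl ⟨w,h1,h2⟩, by rw [Apf_one h2]; exact Finset.card_singleton _⟩
    · exact Or.inr ⟨Or.inr ⟨w,h1,h2⟩, by rw [Apf_one h2]; exact Finset.card_singleton _⟩
  -- counting
  have hApdisj : ∀ p ∈ P, ∀ q ∈ P, p ≠ q → Disjoint (Apf p) (Apf q) := by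
    intro p hp q hq hne
    rw [Finset.disjoint_left]
    intro z hz hz'
    simp only [Apf, Finset.mem_filter] at hz hz'
    exact Set.disjoint_left.1 (hdisj p hp q hq hne) hz.2 hz'.2
  have hbiU : P.biUnion Apf = Finset.univ := by
    apply Finset.eq_univ_of_forall
    intro z
    obtain ⟨p, hp, hz⟩ := hcov' (inl z) (by simp)
    exact Finset.mem_biUnion.2 ⟨p, hp, by simp [Apf, hz]⟩
  have hsum : ∑ p ∈ P, (Apf p).card = Fintype.card VA := by
    rw [← Finset.card_biUnion hApdisj, hbiU, Finset.card_univ]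
  have hsplit := Finset.sum_filter_add_sum_filter_not P
    (fun p => (¬ ∃ u v w : VA, p = (inl u, inl v, inl w)) ∧
      (¬ ∃ u v w : VB, p = (inr u, inr v, inr w))) (fun p => (Apf p).card)
  rw [← hPcdef] at hsplit
  have h3n : 3 ∣ ∑ p ∈ P.filter (fun p => ¬((¬ ∃ u v w : VA, p = (inl u, inl v, inl w)) ∧
      (¬ ∃ u v w : VB, p = (inr u, inr v, inr w)))), (Apf p).card := by
    apply Finset.dvd_sum
    intro p hp
    obtain ⟨hpP, hn⟩ := Finset.mem_filter.1 hp
    rw [not_and_or, not_not, not_not] at hn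
    rcases hn with ⟨u,v,w,rfl⟩ | ⟨u,v,w,rfl⟩
    · obtain ⟨d1, d2, d3, -, -⟩ := hpath _ hpP
      rw [Apf_pureA]
      have h3 : ({u, v, w} : Finset VA).card = 3 :=
        Finset.card_eq_three.2 ⟨u, v, w, by simpa using d1, by simpa using d3, by simpa using d2, rfl⟩
      rw [h3]
    · rw [Apf_pureB]; simp
  have h3A : (3:ℕ) ∣ Fintype.card VA := by omega
  have hs3 : 3 ∣ ∑ p ∈ Pc, (Apf p).card := by omega
  have hterm : ∀ p ∈ Pc, (Apf p).card = 1 ∨ (Apf p).card = 2 := by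
    intro p hp
    rcases hcstruct p hp with ⟨-, h⟩ | ⟨-, h⟩ <;> omega
  have ha2mem : ∀ p ∈ Pc, (inl a1 : VA ⊕ VB) ∉ pVerts p → (inl a2 : VA ⊕ VB) ∈ pVerts p := by
    intro p hp hna
    rcases hcstruct p hp with ⟨hc | hc, -⟩ | ⟨hc | hc, -⟩
    · obtain ⟨u,_,_,_,h4⟩ := hc; exact absurd (by rw [h4]; simp) hna
    · obtain ⟨u,_,_,_,h4⟩ := hc; rw [h4]; simp
    · obtain ⟨w,_,h2⟩ := hc; exact absurd (by rw [h2]; simp) hna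
    · obtain ⟨w,_,h2⟩ := hc; rw [h2]; simp
  have hPc2 : Pc.card ≤ 2 := by
    have h := Finset.card_le_card_of_injOn
      (f := fun p => if (inl a1 : VA ⊕ VB) ∈ pVerts p then (0:Fin 2) else 1)
      (s := Pc) (t := Finset.univ) (fun _ _ => Finset.mem_univ _) ?_
    · simpa using h
    · intro p hp q hq hg
      replace hp : p ∈ Pc := hp
      replace hq : q ∈ Pc := hq
      by_contra hne
      by_cases h1 : (inl a1 : VA ⊕ VB) ∈ pVerts p <;>
        by_cases h2 : (inl a1 : VA ⊕ VB) ∈ pVerts q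
      · exact Set.disjoint_left.1 (hdisj p (hPcP p hp) q (hPcP q hq) hne) h1 h2
      · simp [h1, h2] at hg
      · simp [h1, h2] at hg
      · exact Set.disjoint_left.1 (hdisj p (hPcP p hp) q (hPcP q hq) hne)
          (ha2mem p hp h1) (ha2mem q hq h2)
  have hsle : ∑ p ∈ Pc, (Apf p).card ≤ 2 * Pc.card := by
    calc ∑ p ∈ Pc, (Apf p).card ≤ ∑ _p ∈ Pc, 2 :=
          Finset.sum_le_sum (fun p hp => by rcases hterm p hp with h | h <;> omega)
      _ = 2 * Pc.card := by rw [Finset.sum_const, smul_eq_mul, mul_comm]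
  have hcases : (∑ p ∈ Pc, (Apf p).card) = 0 ∨ (∑ p ∈ Pc, (Apf p).card) = 3 := by omega
  rcases hcases with hzero | hthree
  · -- no crossing paths: B - x has a factor avoiding b
    have hPcE : ∀ p ∈ P, (∃ u v w : VA, p = (inl u,inl v,inl w)) ∨
        (∃ u v w : VB, p = (inr u,inr v,inr w)) := by
      intro p hp
      by_contra hc
      rw [not_or] at hc
      have hpc : p ∈ Pc := Finset.mem_filter.2 ⟨hp, hc.1, hc.2⟩
      have h0 := Finset.sum_eq_zero_iff.1 hzero p hpc
      rcases hterm p hpc with h | h <;> omega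
    set QB := (P.filter (fun p => ∃ u v w : VB, p = (inr u, inr v, inr w))).image (toB b1)
      with hQBdef
    have hmemQB : ∀ q ∈ QB, ∃ p ∈ P, ∃ u v w : VB,
        p = (inr u, inr v, inr w) ∧ q = (u,v,w) := by
      intro q hq
      obtain ⟨p, hp, rfl⟩ := Finset.mem_image.1 hq
      obtain ⟨hpP, u, v, w, rfl⟩ := Finset.mem_filter.1 hp
      exact ⟨_, hpP, u, v, w, rfl, rfl⟩
    have hQB : IsFactorOn B ({x} : Set VB)ᶜ QB := by
      refine ⟨⟨?_, ?_⟩, ?_, ?_⟩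
      · intro q hq
        obtain ⟨p, hpP, u, v, w, rfl, rfl⟩ := hmemQB q hq
        obtain ⟨d1, d2, d3, e1, e2⟩ := hpath _ hpP
        rw [glue_rr] at e1 e2
        exact ⟨by simpa using d1, by simpa using d2, by simpa using d3,
          (SimpleGraph.deleteEdges_adj.1 e1).1,
          (SimpleGraph.deleteEdges_adj.1 e2).1⟩
      · intro q hq q' hq' hne
        obtain ⟨p, hpP, u, v, w, rfl, rfl⟩ := hmemQB q hq
        obtain ⟨p', hpP', u', v', w', rfl, rfl⟩ := hmemQB q' hq'
        have hpp' : ((inr u, inr v, inr w) : (VA ⊕ VB) × (VA ⊕ VB) × (VA ⊕ VB)) ≠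
            (inr u', inr v', inr w') := by
          intro hEq
          obtain ⟨h1, h2, h3⟩ : u = u' ∧ v = v' ∧ w = w' := by simpa using hEq
          exact hne (by rw [h1, h2, h3])
        rw [Set.disjoint_left]
        intro z hz hz'
        have h1 : (inr z : VA ⊕ VB) ∈ pVerts ((inr u, inr v, inr w) :
            (VA ⊕ VB) × (VA ⊕ VB) × (VA ⊕ VB)) := by
          simp only [pVerts, Set.mem_insert_iff, Set.mem_singleton_iff] at hz ⊢
          rcases hz with h | h | h <;> simp [h]
        have h2 : (inr z : VA ⊕ VB) ∈ pVerts ((inr u', inr v', inr w') :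
            (VA ⊕ VB) × (VA ⊕ VB) × (VA ⊕ VB)) := by
          simp only [pVerts, Set.mem_insert_iff, Set.mem_singleton_iff] at hz' ⊢
          rcases hz' with h | h | h <;> simp [h]
        exact Set.disjoint_left.1 (hdisj _ hpP _ hpP' hpp') h1 h2
      · intro q hq z hz
        obtain ⟨p, hpP, u, v, w, rfl, rfl⟩ := hmemQB q hq
        have : (inr z : VA ⊕ VB) ∈ pVerts ((inr u, inr v, inr w) :
            (VA ⊕ VB) × (VA ⊕ VB) × (VA ⊕ VB)) := by
          simp only [pVerts, Set.mem_insert_iff, Set.mem_singleton_iff] at hz ⊢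
          rcases hz with h | h | h <;> simp [h]
        have hx' := hsub _ hpP this
        simp only [Set.mem_compl_iff, Set.mem_singleton_iff] at hx' ⊢
        intro hzx; exact hx' (by rw [hzx])
      · intro v hv
        simp only [Set.mem_compl_iff, Set.mem_singleton_iff] at hv
        obtain ⟨p, hpP, hvp⟩ := hcov' (inr v) (by simp [hv])
        rcases hPcE p hpP with ⟨u',v',w',rfl⟩ | ⟨u',v',w',rfl⟩
        · simp [pVerts] at hvp
        · refine ⟨toB b1 (inr u', inr v', inr w'), Finset.mem_image_of_mem _
            (Finset.mem_filter.2 ⟨hpP, u', v', w', rfl⟩), ?_⟩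
          show v ∈ pVerts ((u', v', w') : VB × VB × VB)
          simp only [pVerts, Set.mem_insert_iff, Set.mem_singleton_iff, Sum.inr.injEq] at hvp ⊢
          exact hvp
    obtain ⟨q, hqQB, hqe⟩ := hB QB hQB
    obtain ⟨p, hpP, u, v, w, rfl, rfl⟩ := hmemQB q hqQB
    obtain ⟨-, -, -, e1, e2⟩ := hpath _ hpP
    rw [glue_rr] at e1 e2
    have he1 := (SimpleGraph.deleteEdges_adj.1 e1).2
    have he2 := (SimpleGraph.deleteEdges_adj.1 e2).2
    simp only [pEdges, Set.mem_insert_iff, Set.mem_singleton_iff] at hqe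
    rcases hqe with h | h
    · exact he1 (Set.mem_singleton_iff.2 h.symm)
    · exact he2 (Set.mem_singleton_iff.2 h.symm)
  · -- exactly two crossing paths
    have hPcc : Pc.card = 2 := by
      have : 2 ≤ Pc.card := by omega
      omega
    obtain ⟨r1, r2, hrne, hPc⟩ := Finset.card_eq_two.1 hPcc
    have hr1 : r1 ∈ Pc := by rw [hPc]; simp
    have hr2 : r2 ∈ Pc := by rw [hPc]; simp
    have hsumpair : (Apf r1).card + (Apf r2).card = 3 := by
      rw [hPc, Finset.sum_pair hrne] at hthree; exact hthree
    -- the builder: gives a Λ-factor of A containing the edge a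
    have build : ∀ (c d u : VA) (s1 s2 : (VA ⊕ VB) × (VA ⊕ VB) × (VA ⊕ VB)),
        s1 ∈ Pc → s2 ∈ Pc → s1 ≠ s2 → Pc = {s1, s2} →
        A.Adj c d → s(c, d) = s(a1, a2) → A.Adj u c → u ≠ c → u ≠ d →
        (∀ z : VA, (inl z : VA ⊕ VB) ∈ pVerts s1 ↔ z = u ∨ z = c) →
        (∀ z : VA, (inl z : VA ⊕ VB) ∈ pVerts s2 ↔ z = d) → False := by
      intro c d u s1 s2 hs1 hs2 hsne hPcs hcd hsym huc hu1 hu2 hv1 hv2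
      apply hA
      refine ⟨insert (u, c, d) ((P.filter (fun p => ∃ α β γ : VA,
        p = (inl α, inl β, inl γ))).image (toA a1)), ⟨⟨?_, ?_⟩, ?_, ?_⟩, ?_⟩
      · -- paths
        intro q hq
        rcases Finset.mem_insert.1 hq with rfl | hq'
        · exact ⟨hu1, hcd.ne, hu2, huc, hcd⟩
        · obtain ⟨p, hp, rfl⟩ := Finset.mem_image.1 hq'
          obtain ⟨hpP, α, β, γ, rfl⟩ := Finset.mem_filter.1 hp
          obtain ⟨d1, d2, d3, e1, e2⟩ := hpath _ hpP
          rw [glue_ll] at e1 e2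
          exact ⟨by simpa [toA] using d1, by simpa [toA] using d2, by simpa [toA] using d3,
            (SimpleGraph.deleteEdges_adj.1 e1).1,
            (SimpleGraph.deleteEdges_adj.1 e2).1⟩
      · -- disjointness
        intro q hq q' hq' hne
        have key : ∀ p, p ∈ P → (∃ α β γ : VA, p = (inl α, inl β, inl γ)) →
            Disjoint (pVerts ((u,c,d) : VA × VA × VA)) (pVerts (toA a1 p)) := by
          rintro p hpP ⟨α, β, γ, rfl⟩
          have hps1 : (inl α, inl β, inl γ) ≠ s1 := by
            rintro rfl
            obtain ⟨-, hn, -⟩ := Finset.mem_filter.1 hs1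
            exact hn ⟨α, β, γ, rfl⟩
          have hps2 : (inl α, inl β, inl γ) ≠ s2 := by
            rintro rfl
            obtain ⟨-, hn, -⟩ := Finset.mem_filter.1 hs2
            exact hn ⟨α, β, γ, rfl⟩
          rw [Set.disjoint_left]
          intro z hz hz'
          have hzA : (inl z : VA ⊕ VB) ∈ pVerts ((inl α, inl β, inl γ) :
              (VA ⊕ VB) × (VA ⊕ VB) × (VA ⊕ VB)) := by
            simp only [pVerts, toA, Set.mem_insert_iff, Set.mem_singleton_iff] at hz' ⊢
            rcases hz' with h | h | h <;> simp [h]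
          simp only [pVerts, Set.mem_insert_iff, Set.mem_singleton_iff] at hz
          rcases hz with rfl | rfl | rfl
          · exact Set.disjoint_left.1 (hdisj s1 (hPcP _ hs1) _ hpP hps1.symm)
              ((hv1 z).2 (Or.inl rfl)) hzA
          · exact Set.disjoint_left.1 (hdisj s1 (hPcP _ hs1) _ hpP hps1.symm)
              ((hv1 z).2 (Or.inr rfl)) hzA
          · exact Set.disjoint_left.1 (hdisj s2 (hPcP _ hs2) _ hpP hps2.symm)
              ((hv2 z).2 rfl) hzA
        rcases Finset.mem_insert.1 hq with rfl | hq1 <;> rcases Finset.mem_insert.1 hq' with rfl | hq2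
        · exact absurd rfl hne
        · obtain ⟨p, hp, rfl⟩ := Finset.mem_image.1 hq2
          obtain ⟨hpP, hsh⟩ := Finset.mem_filter.1 hp
          exact key p hpP hsh
        · obtain ⟨p, hp, rfl⟩ := Finset.mem_image.1 hq1
          obtain ⟨hpP, hsh⟩ := Finset.mem_filter.1 hp
          exact (key p hpP hsh).symm
        · obtain ⟨p, hp, rfl⟩ := Finset.mem_image.1 hq1
          obtain ⟨hpP, α, β, γ, rfl⟩ := Finset.mem_filter.1 hp
          obtain ⟨p', hp', rfl⟩ := Finset.mem_image.1 hq2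
          obtain ⟨hpP', α', β', γ', rfl⟩ := Finset.mem_filter.1 hp'
          have hpp' : ((inl α, inl β, inl γ) : (VA ⊕ VB) × (VA ⊕ VB) × (VA ⊕ VB)) ≠
              (inl α', inl β', inl γ') := by
            rintro h
            apply hne
            rw [h]
          rw [Set.disjoint_left]
          intro z hz hz'
          have h1 : (inl z : VA ⊕ VB) ∈ pVerts ((inl α, inl β, inl γ) :
              (VA ⊕ VB) × (VA ⊕ VB) × (VA ⊕ VB)) := by
            simp only [pVerts, toA, Set.mem_insert_iff, Set.mem_singleton_iff] at hz ⊢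
            rcases hz with h | h | h <;> simp [h]
          have h2 : (inl z : VA ⊕ VB) ∈ pVerts ((inl α', inl β', inl γ') :
              (VA ⊕ VB) × (VA ⊕ VB) × (VA ⊕ VB)) := by
            simp only [pVerts, toA, Set.mem_insert_iff, Set.mem_singleton_iff] at hz' ⊢
            rcases hz' with h | h | h <;> simp [h]
          exact Set.disjoint_left.1 (hdisj _ hpP _ hpP' hpp') h1 h2
      · intro q hq; exact Set.subset_univ _
      · -- coverage
        intro v _
        obtain ⟨p, hpP, hvp⟩ := hcov' (inl v) (by simp)
        by_cases hc : (¬ ∃ α β γ : VA, p = (inl α, inl β, inl γ)) ∧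
            (¬ ∃ α β γ : VB, p = (inr α, inr β, inr γ))
        · have hpc : p ∈ Pc := Finset.mem_filter.2 ⟨hpP, hc⟩
          rw [hPcs] at hpc
          refine ⟨(u, c, d), Finset.mem_insert_self _ _, ?_⟩
          rcases Finset.mem_insert.1 hpc with rfl | hpc2
          · rcases (hv1 v).1 hvp with rfl | rfl <;>
              simp [pVerts]
          · rw [Finset.mem_singleton.1 hpc2] at hvp
            rcases (hv2 v).1 hvp with rfl
            simp [pVerts]
        · rw [not_and_or, not_not, not_not] at hc
          rcases hc with ⟨α, β, γ, rfl⟩ | ⟨α, β, γ, rfl⟩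
          · refine ⟨toA a1 (inl α, inl β, inl γ), Finset.mem_insert_of_mem
              (Finset.mem_image_of_mem _ (Finset.mem_filter.2 ⟨hpP, α, β, γ, rfl⟩)), ?_⟩
            show v ∈ pVerts ((α, β, γ) : VA × VA × VA)
            simp only [pVerts, Set.mem_insert_iff, Set.mem_singleton_iff, Sum.inl.injEq] at hvp ⊢
            exact hvp
          · simp [pVerts] at hvp
      · -- contains the edge a
        refine ⟨(u, c, d), Finset.mem_insert_self _ _, ?_⟩
        simp only [pEdges, Set.mem_insert_iff, Set.mem_singleton_iff]
        exact Or.inr hsym.symm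
    -- finish: case analysis on the two crossing paths
    have main : ∀ s1 s2, s1 ∈ Pc → s2 ∈ Pc → s1 ≠ s2 → Pc = {s1, s2} →
        (Apf s1).card = 2 → (Apf s2).card = 1 → False := by
      intro s1 s2 hs1 hs2 hsne hPcs hc1 hc2
      have hd := hdisj s1 (hPcP _ hs1) s2 (hPcP _ hs2) hsne
      rcases hcstruct s1 hs1 with ⟨hc | hc, -⟩ | ⟨-, h⟩
      · obtain ⟨u, hu1, hu2, hadj, hpv⟩ := hc
        rcases hcstruct s2 hs2 with ⟨-, h⟩ | ⟨hc' | hc', -⟩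
        · omega
        · obtain ⟨w, -, hqv⟩ := hc'
          exact Set.disjoint_left.1 hd
            (show (inl a1 : VA ⊕ VB) ∈ pVerts s1 by rw [hpv]; simp)
            (show (inl a1 : VA ⊕ VB) ∈ pVerts s2 by rw [hqv]; simp)
        · obtain ⟨w, -, hqv⟩ := hc'
          exact build a1 a2 u s1 s2 hs1 hs2 hsne hPcs ha rfl
            (SimpleGraph.deleteEdges_adj.1 hadj).1 hu1 hu2
            (by intro z; rw [hpv]; simp) (by intro z; rw [hqv]; simp)
      · obtain ⟨u, hu1, hu2, hadj, hpv⟩ := hc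
        rcases hcstruct s2 hs2 with ⟨-, h⟩ | ⟨hc' | hc', -⟩
        · omega
        · obtain ⟨w, -, hqv⟩ := hc'
          exact build a2 a1 u s1 s2 hs1 hs2 hsne hPcs ha.symm (Sym2.eq_swap)
            (SimpleGraph.deleteEdges_adj.1 hadj).1 hu2 hu1
            (by intro z; rw [hpv]; simp) (by intro z; rw [hqv]; simp)
        · obtain ⟨w, -, hqv⟩ := hc'
          exact Set.disjoint_left.1 hd
            (show (inl a2 : VA ⊕ VB) ∈ pVerts s1 by rw [hpv]; simp)
            (show (inl a2 : VA ⊕ VB) ∈ pVerts s2 by rw [hqv]; simp)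
      · omega
    rcases hterm r1 hr1 with h1 | h1 <;> rcases hterm r2 hr2 with h2 | h2
    · omega
    · exact main r2 r1 hr2 hr1 hrne.symm (by rw [hPc, Finset.pair_comm]) h2 h1
    · exact main r1 r2 hr1 hr2 hrne hPc h1 h2
    · omega
end

section
/- Let A and B be disjoint cubic graphs with v(A) ≡ 0 (mod 6) and v(B) ≡ 0 (mod 6), let a = a₁a₂ be an edge of A and b = b₁b₂ an edge of B, and suppose that A has no Λ-factor containing the edge a and B has no Λ-factor avoiding the edge b. Let G = AabB. Then v(G) ≡ 0 (mod 6) and G has no Λ-factor. -/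
open SimpleGraph

section
variable {VA VB : Type*} (A : SimpleGraph VA) (B : SimpleGraph VB) (a1 a2 : VA) (b1 b2 : VB)

lemma glue_adj_ll (x y : VA) :
    (edgeGlue A B a1 a2 b1 b2).Adj (Sum.inl x) (Sum.inl y) ↔
      (A.deleteEdges {s(a1,a2)}).Adj x y := by
  simp only [edgeGlue, SimpleGraph.fromRel_adj]
  constructor
  · rintro ⟨h, h1 | h1⟩
    · exact h1
    · exact h1.symm
  · intro h; exact ⟨by simpa using h.ne, Or.inl h⟩

lemma glue_adj_rr (x y : VB) :
    (edgeGlue A B a1 a2 b1 b2).Adj (Sum.inr x) (Sum.inr y) ↔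
      (B.deleteEdges {s(b1,b2)}).Adj x y := by
  simp only [edgeGlue, SimpleGraph.fromRel_adj]
  constructor
  · rintro ⟨h, h1 | h1⟩
    · exact h1
    · exact h1.symm
  · intro h; exact ⟨by simpa using h.ne, Or.inl h⟩

lemma glue_adj_lr (x : VA) (y : VB) :
    (edgeGlue A B a1 a2 b1 b2).Adj (Sum.inl x) (Sum.inr y) ↔
      (x = a1 ∧ y = b1) ∨ (x = a2 ∧ y = b2) := by
  simp only [edgeGlue, SimpleGraph.fromRel_adj]
  constructor
  · rintro ⟨h, h1 | h1⟩
    · exact h1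
    · exact h1.elim
  · intro h; exact ⟨by simp, Or.inl h⟩

lemma glue_adj_rl (y : VB) (x : VA) :
    (edgeGlue A B a1 a2 b1 b2).Adj (Sum.inr y) (Sum.inl x) ↔
      (x = a1 ∧ y = b1) ∨ (x = a2 ∧ y = b2) := by
  rw [SimpleGraph.adj_comm]; exact glue_adj_lr A B a1 a2 b1 b2 x y
end
def pureL {VA VB : Type*} (p : (VA⊕VB) × (VA⊕VB) × (VA⊕VB)) : Prop :=
  ∀ v ∈ pVerts p, ∃ w, v = Sum.inl w

def pureR {VA VB : Type*} (p : (VA⊕VB) × (VA⊕VB) × (VA⊕VB)) : Prop :=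
  ∀ v ∈ pVerts p, ∃ w, v = Sum.inr w

section
variable {VA VB : Type*} {A : SimpleGraph VA} {B : SimpleGraph VB} {a1 a2 : VA} {b1 b2 : VB}

lemma pureR_struct {P : Finset ((VA⊕VB) × (VA⊕VB) × (VA⊕VB))} :
    ∀ p ∈ P, pureR p → ∃ y1 y2 y3, p = (Sum.inr y1, Sum.inr y2, Sum.inr y3) := by
  rintro ⟨u, v, w⟩ _ hpr
  obtain ⟨y1, h1⟩ := hpr u (by simp [pVerts])
  obtain ⟨y2, h2⟩ := hpr v (by simp [pVerts])
  obtain ⟨y3, h3⟩ := hpr w (by simp [pVerts])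
  exact ⟨y1, y2, y3, by simp [h1, h2, h3]⟩

lemma pureL_struct {P : Finset ((VA⊕VB) × (VA⊕VB) × (VA⊕VB))} :
    ∀ p ∈ P, pureL p → ∃ x1 x2 x3, p = (Sum.inl x1, Sum.inl x2, Sum.inl x3) := by
  rintro ⟨u, v, w⟩ _ hpr
  obtain ⟨y1, h1⟩ := hpr u (by simp [pVerts])
  obtain ⟨y2, h2⟩ := hpr v (by simp [pVerts])
  obtain ⟨y3, h3⟩ := hpr w (by simp [pVerts])
  exact ⟨y1, y2, y3, by simp [h1, h2, h3]⟩

lemma extractB (P : Finset ((VA⊕VB) × (VA⊕VB) × (VA⊕VB)))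
    (hfac : IsFactor (edgeGlue A B a1 a2 b1 b2) P)
    (hall : ∀ p ∈ P, pureL p ∨ pureR p) :
    ∃ Q, IsFactor B Q ∧ ¬ PContains Q s(b1, b2) := by
  classical
  obtain ⟨⟨hpath, hdisj⟩, -, hcov⟩ := hfac
  set mR : VA ⊕ VB → VB := Sum.elim (fun _ => b1) id with hmR
  set mp3 : ((VA⊕VB) × (VA⊕VB) × (VA⊕VB)) → VB × VB × VB :=
    fun p => (mR p.1, mR p.2.1, mR p.2.2) with hmp3
  refine ⟨(P.filter pureR).image mp3, ⟨⟨?_, ?_⟩, fun p _ => Set.subset_univ _, ?_⟩, ?_⟩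
  · -- each image is a path of B
    intro q hq
    obtain ⟨p, hpF, rfl⟩ := Finset.mem_image.mp hq
    obtain ⟨hp, hpr⟩ := Finset.mem_filter.mp hpF
    obtain ⟨y1, y2, y3, rfl⟩ := pureR_struct p hp hpr
    obtain ⟨hne1, hne2, hne3, hadj1, hadj2⟩ := hpath _ hp
    refine ⟨by simpa [mp3, mR] using hne1, by simpa [mp3, mR] using hne2, by simpa [mp3, mR] using hne3, ?_, ?_⟩
    · exact (SimpleGraph.deleteEdges_adj.mp ((glue_adj_rr A B a1 a2 b1 b2 _ _).mp hadj1)).1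
    · exact (SimpleGraph.deleteEdges_adj.mp ((glue_adj_rr A B a1 a2 b1 b2 _ _).mp hadj2)).1
  · -- disjointness
    intro q hq q' hq' hne
    obtain ⟨p, hpF, rfl⟩ := Finset.mem_image.mp hq
    obtain ⟨p', hpF', rfl⟩ := Finset.mem_image.mp hq'
    obtain ⟨hp, hpr⟩ := Finset.mem_filter.mp hpF
    obtain ⟨hp', hpr'⟩ := Finset.mem_filter.mp hpF'
    have hpp' : p ≠ p' := fun h => hne (by rw [h])
    obtain ⟨y1, y2, y3, rfl⟩ := pureR_struct p hp hpr
    obtain ⟨z1, z2, z3, rfl⟩ := pureR_struct p' hp' hpr'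
    rw [Set.disjoint_left]
    intro z hz hz'
    have h1 : (Sum.inr z : VA ⊕ VB) ∈ pVerts (Sum.inr y1, Sum.inr y2, Sum.inr y3) := by
      simp [pVerts, mp3, mR] at hz ⊢; tauto
    have h2 : (Sum.inr z : VA ⊕ VB) ∈ pVerts (Sum.inr z1, Sum.inr z2, Sum.inr z3) := by
      simp [pVerts, mp3, mR] at hz' ⊢; tauto
    exact Set.disjoint_left.mp (hdisj _ hp _ hp' hpp') h1 h2
  · -- coverage
    intro v _
    obtain ⟨p, hp, hv⟩ := hcov (Sum.inr v) trivial
    have hpr : pureR p := by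
      rcases hall p hp with h | h
      · obtain ⟨w, hw⟩ := h _ hv; exact absurd hw (by simp)
      · exact h
    refine ⟨mp3 p, Finset.mem_image_of_mem _ (Finset.mem_filter.mpr ⟨hp, hpr⟩), ?_⟩
    obtain ⟨y1, y2, y3, rfl⟩ := pureR_struct p hp hpr
    simp [pVerts, mp3, mR] at hv ⊢; tauto
  · -- avoids b
    rintro ⟨q, hq, he⟩
    obtain ⟨p, hpF, rfl⟩ := Finset.mem_image.mp hq
    obtain ⟨hp, hpr⟩ := Finset.mem_filter.mp hpF
    obtain ⟨y1, y2, y3, rfl⟩ := pureR_struct p hp hpr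
    obtain ⟨-, -, -, hadj1, hadj2⟩ := hpath _ hp
    have hb1 := (SimpleGraph.deleteEdges_adj.mp ((glue_adj_rr A B a1 a2 b1 b2 _ _).mp hadj1)).2
    have hb2 := (SimpleGraph.deleteEdges_adj.mp ((glue_adj_rr A B a1 a2 b1 b2 _ _).mp hadj2)).2
    simp [pEdges, mp3, mR] at he
    rcases he with h | h
    · exact hb1 (by simp; tauto)
    · exact hb2 (by simp; tauto)
end
section
variable {VA VB : Type*} {A : SimpleGraph VA} {B : SimpleGraph VB} {a1 a2 : VA} {b1 b2 : VB}

lemma keyA (ha : A.Adj a1 a2)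
    (P : Finset ((VA⊕VB) × (VA⊕VB) × (VA⊕VB)))
    (hfac : IsFactor (edgeGlue A B a1 a2 b1 b2) P)
    (r s : (VA⊕VB) × (VA⊕VB) × (VA⊕VB)) (hr : r ∈ P) (hs : s ∈ P)
    (hCr : ∀ p ∈ P, ¬ pureL p → ¬ pureR p → p = r ∨ p = s)
    (x : VA) (hx : (A.deleteEdges {s(a1,a2)}).Adj x a1)
    (hfr : pVerts r = {Sum.inl x, Sum.inl a1, Sum.inr b1})
    (hs2 : Sum.inl a2 ∈ pVerts s)
    (hsonly : ∀ v, Sum.inl v ∈ pVerts s → v = a2)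
    (hsnl : ¬ pureL s) :
    ∃ Q, IsFactor A Q ∧ PContains Q s(a1, a2) := by
  classical
  obtain ⟨⟨hpath, hdisj⟩, -, hcov⟩ := hfac
  have hxA : A.Adj x a1 := (SimpleGraph.deleteEdges_adj.mp hx).1
  have hxa1 : x ≠ a1 := hxA.ne
  have hxa2 : x ≠ a2 := by
    intro h
    exact (SimpleGraph.deleteEdges_adj.mp hx).2 (by rw [h, Sym2.eq_swap]; rfl)
  set mL : VA ⊕ VB → VA := Sum.elim id (fun _ => a1) with hmL
  set mp3 : ((VA⊕VB) × (VA⊕VB) × (VA⊕VB)) → VA × VA × VA :=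
    fun p => (mL p.1, mL p.2.1, mL p.2.2) with hmp3
  -- pure-left paths are different from r and s
  have hner : ∀ p ∈ P, pureL p → p ≠ r := by
    intro p _ hpl h
    obtain ⟨w, hw⟩ := hpl (Sum.inr b1) (by rw [h, hfr]; simp)
    simp at hw
  have hnes : ∀ p ∈ P, pureL p → p ≠ s := by
    intro p _ hpl h
    exact hsnl (h ▸ hpl)
  -- disjointness of a pure-left path's left vertices from {x, a1, a2}
  have hdisjL : ∀ p ∈ P, pureL p → ∀ v : VA, Sum.inl v ∈ pVerts p → v ≠ x ∧ v ≠ a1 ∧ v ≠ a2 := by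
    intro p hp hpl v hv
    refine ⟨?_, ?_, ?_⟩
    · rintro rfl
      exact Set.disjoint_left.mp (hdisj p hp r hr (hner p hp hpl)) hv (by rw [hfr]; simp)
    · rintro rfl
      exact Set.disjoint_left.mp (hdisj p hp r hr (hner p hp hpl)) hv (by rw [hfr]; simp)
    · rintro rfl
      exact Set.disjoint_left.mp (hdisj p hp s hs (hnes p hp hpl)) hv hs2
  refine ⟨insert (x, a1, a2) ((P.filter pureL).image mp3),
    ⟨⟨?_, ?_⟩, fun p _ => Set.subset_univ _, ?_⟩, ⟨(x, a1, a2), Finset.mem_insert_self _ _, by simp [pEdges]⟩⟩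
  · -- paths
    intro q hq
    rcases Finset.mem_insert.mp hq with rfl | hq
    · exact ⟨hxa1, ha.ne, hxa2, hxA, ha⟩
    · obtain ⟨p, hpF, rfl⟩ := Finset.mem_image.mp hq
      obtain ⟨hp, hpl⟩ := Finset.mem_filter.mp hpF
      obtain ⟨x1, x2, x3, rfl⟩ := pureL_struct p hp hpl
      obtain ⟨hne1, hne2, hne3, hadj1, hadj2⟩ := hpath _ hp
      refine ⟨by simpa [mp3, mL] using hne1, by simpa [mp3, mL] using hne2, by simpa [mp3, mL] using hne3, ?_, ?_⟩
      · exact (SimpleGraph.deleteEdges_adj.mp ((glue_adj_ll A B a1 a2 b1 b2 _ _).mp hadj1)).1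
      · exact (SimpleGraph.deleteEdges_adj.mp ((glue_adj_ll A B a1 a2 b1 b2 _ _).mp hadj2)).1
  · -- disjointness
    have himg : ∀ q ∈ (P.filter pureL).image mp3, Disjoint (pVerts (x, a1, a2)) (pVerts q) := by
      intro q hq
      obtain ⟨p, hpF, rfl⟩ := Finset.mem_image.mp hq
      obtain ⟨hp, hpl⟩ := Finset.mem_filter.mp hpF
      obtain ⟨x1, x2, x3, rfl⟩ := pureL_struct p hp hpl
      rw [Set.disjoint_left]
      intro z hz hz'
      have hz'' : (Sum.inl z : VA ⊕ VB) ∈ pVerts (Sum.inl x1, Sum.inl x2, Sum.inl x3) := by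
        simp [pVerts, mp3, mL] at hz' ⊢; tauto
      obtain ⟨h1, h2, h3⟩ := hdisjL _ hp hpl z hz''
      simp [pVerts] at hz; tauto
    intro q hq q' hq' hne
    rcases Finset.mem_insert.mp hq with rfl | hq
    · rcases Finset.mem_insert.mp hq' with rfl | hq'
      · exact absurd rfl hne
      · exact himg _ hq'
    · rcases Finset.mem_insert.mp hq' with rfl | hq'
      · exact (himg _ hq).symm
      · obtain ⟨p, hpF, rfl⟩ := Finset.mem_image.mp hq
        obtain ⟨p', hpF', rfl⟩ := Finset.mem_image.mp hq'
        obtain ⟨hp, hpl⟩ := Finset.mem_filter.mp hpF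
        obtain ⟨hp', hpl'⟩ := Finset.mem_filter.mp hpF'
        have hpp' : p ≠ p' := fun h => hne (by rw [h])
        obtain ⟨y1, y2, y3, rfl⟩ := pureL_struct p hp hpl
        obtain ⟨z1, z2, z3, rfl⟩ := pureL_struct p' hp' hpl'
        rw [Set.disjoint_left]
        intro z hz hz'
        have h1 : (Sum.inl z : VA ⊕ VB) ∈ pVerts (Sum.inl y1, Sum.inl y2, Sum.inl y3) := by
          simp [pVerts, mp3, mL] at hz ⊢; tauto
        have h2 : (Sum.inl z : VA ⊕ VB) ∈ pVerts (Sum.inl z1, Sum.inl z2, Sum.inl z3) := by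
          simp [pVerts, mp3, mL] at hz' ⊢; tauto
        exact Set.disjoint_left.mp (hdisj _ hp _ hp' hpp') h1 h2
  · -- coverage
    intro v _
    obtain ⟨p, hp, hv⟩ := hcov (Sum.inl v) trivial
    by_cases hpl : pureL p
    · refine ⟨mp3 p, Finset.mem_insert_of_mem
        (Finset.mem_image_of_mem _ (Finset.mem_filter.mpr ⟨hp, hpl⟩)), ?_⟩
      obtain ⟨x1, x2, x3, rfl⟩ := pureL_struct p hp hpl
      simp [pVerts, mp3, mL] at hv ⊢; tauto
    · have hpr : ¬ pureR p := by
        intro h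
        obtain ⟨w, hw⟩ := h _ hv
        simp at hw
      rcases hCr p hp hpl hpr with rfl | rfl
      · refine ⟨(x, a1, a2), Finset.mem_insert_self _ _, ?_⟩
        rw [hfr] at hv
        simp [pVerts] at hv ⊢
        tauto
      · exact ⟨(x, a1, a2), Finset.mem_insert_self _ _, by simp [pVerts, hsonly v hv]⟩
end
section
variable {VA VB : Type*} (A : SimpleGraph VA) (B : SimpleGraph VB) (a1 a2 : VA) (b1 b2 : VB)

lemma glue_swap : edgeGlue A B a2 a1 b2 b1 = edgeGlue A B a1 a2 b1 b2 := by
  ext u v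
  cases u <;> cases v <;>
    simp [glue_adj_ll, glue_adj_rr, glue_adj_lr, glue_adj_rl,
      SimpleGraph.deleteEdges_adj, Sym2.eq_swap] <;> tauto
end
section
variable {VA VB : Type*} {A : SimpleGraph VA} {B : SimpleGraph VB} {a1 a2 : VA} {b1 b2 : VB}

lemma cross_struct (ha : A.Adj a1 a2) (hb : B.Adj b1 b2)
    (p : (VA⊕VB) × (VA⊕VB) × (VA⊕VB))
    (hp : IsPathL (edgeGlue A B a1 a2 b1 b2) p)
    (hnl : ¬ pureL p) (hnr : ¬ pureR p) :
    (∃ x, (A.deleteEdges {s(a1,a2)}).Adj x a1 ∧ pVerts p = {Sum.inl x, Sum.inl a1, Sum.inr b1}) ∨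
    (∃ x, (A.deleteEdges {s(a1,a2)}).Adj x a2 ∧ pVerts p = {Sum.inl x, Sum.inl a2, Sum.inr b2}) ∨
    (∃ y, (B.deleteEdges {s(b1,b2)}).Adj y b1 ∧ pVerts p = {Sum.inr y, Sum.inr b1, Sum.inl a1}) ∨
    (∃ y, (B.deleteEdges {s(b1,b2)}).Adj y b2 ∧ pVerts p = {Sum.inr y, Sum.inr b2, Sum.inl a2}) := by
  obtain ⟨u, v, w⟩ := p
  obtain ⟨h12, h23, h13, hA1, hA2⟩ := hp
  rcases u with x | y <;> rcases v with x' | y' <;> rcases w with x'' | y''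
  · -- LLL
    exact absurd (by rintro z hz; simp [pVerts] at hz; rcases hz with rfl | rfl | rfl <;> exact ⟨_, rfl⟩) hnl
  · -- LLR
    rcases (glue_adj_lr A B a1 a2 b1 b2 _ _).mp hA2 with ⟨h1, h2⟩ | ⟨h1, h2⟩ <;> subst x' <;> subst y''
    · exact Or.inl ⟨x, (glue_adj_ll A B a1 a2 b1 b2 _ _).mp hA1, rfl⟩
    · exact Or.inr (Or.inl ⟨x, (glue_adj_ll A B a1 a2 b1 b2 _ _).mp hA1, rfl⟩)
  · -- LRL
    rcases (glue_adj_lr A B a1 a2 b1 b2 _ _).mp hA1 with ⟨h1, h2⟩ | ⟨h1, h2⟩ <;> subst x <;> subst y' <;>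
      rcases (glue_adj_rl A B a1 a2 b1 b2 _ _).mp hA2 with ⟨h3, h4⟩ | ⟨h3, h4⟩
    · exact absurd (h3 ▸ rfl) h13
    · exact absurd h4 hb.ne
    · exact absurd h4.symm hb.ne
    · exact absurd (h3 ▸ rfl) h13
  · -- LRR
    rcases (glue_adj_lr A B a1 a2 b1 b2 _ _).mp hA1 with ⟨h1, h2⟩ | ⟨h1, h2⟩ <;> subst x <;> subst y'
    · refine Or.inr (Or.inr (Or.inl ⟨y'', ((glue_adj_rr A B a1 a2 b1 b2 _ _).mp hA2).symm, ?_⟩))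
      ext z; simp [pVerts]; tauto
    · refine Or.inr (Or.inr (Or.inr ⟨y'', ((glue_adj_rr A B a1 a2 b1 b2 _ _).mp hA2).symm, ?_⟩))
      ext z; simp [pVerts]; tauto
  · -- RLL
    rcases (glue_adj_rl A B a1 a2 b1 b2 _ _).mp hA1 with ⟨h1, h2⟩ | ⟨h1, h2⟩ <;> subst x' <;> subst y
    · refine Or.inl ⟨x'', ((glue_adj_ll A B a1 a2 b1 b2 _ _).mp hA2).symm, ?_⟩
      ext z; simp [pVerts]; tauto
    · refine Or.inr (Or.inl ⟨x'', ((glue_adj_ll A B a1 a2 b1 b2 _ _).mp hA2).symm, ?_⟩)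
      ext z; simp [pVerts]; tauto
  · -- RLR
    rcases (glue_adj_rl A B a1 a2 b1 b2 _ _).mp hA1 with ⟨h1, h2⟩ | ⟨h1, h2⟩ <;> subst x' <;> subst y <;>
      rcases (glue_adj_lr A B a1 a2 b1 b2 _ _).mp hA2 with ⟨h3, h4⟩ | ⟨h3, h4⟩
    · exact absurd (h4 ▸ rfl) h13
    · exact absurd h3 ha.ne
    · exact absurd h3.symm ha.ne
    · exact absurd (h4 ▸ rfl) h13
  · -- RRL
    rcases (glue_adj_rl A B a1 a2 b1 b2 _ _).mp hA2 with ⟨h1, h2⟩ | ⟨h1, h2⟩ <;> subst x'' <;> subst y'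
    · exact Or.inr (Or.inr (Or.inl ⟨y, (glue_adj_rr A B a1 a2 b1 b2 _ _).mp hA1, rfl⟩))
    · exact Or.inr (Or.inr (Or.inr ⟨y, (glue_adj_rr A B a1 a2 b1 b2 _ _).mp hA1, rfl⟩))
  · -- RRR
    exact absurd (by rintro z hz; simp [pVerts] at hz; rcases hz with rfl | rfl | rfl <;> exact ⟨_, rfl⟩) hnr
end

/-- If `A, B` are cubic with `v(A) ≡ v(B) ≡ 0 (mod 6)`, `A` has no `Λ`-factor containing
`a = a₁a₂`, and `B` has no `Λ`-factor avoiding `b = b₁b₂`, then `G = AabB` satisfies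
`v(G) ≡ 0 (mod 6)` and has no `Λ`-factor. -/
theorem stmt17 {VA VB : Type*} [Fintype VA] [Fintype VB]
    (A : SimpleGraph VA) (B : SimpleGraph VB) (a1 a2 : VA) (b1 b2 : VB)
    (hcA : IsCubic A) (hcB : IsCubic B)
    (hmA : Fintype.card VA % 6 = 0) (hmB : Fintype.card VB % 6 = 0)
    (ha : A.Adj a1 a2) (hb : B.Adj b1 b2)
    (hA : ¬ ∃ P, IsFactor A P ∧ PContains P s(a1, a2))
    (hB : ∀ P, IsFactor B P → PContains P s(b1, b2)) :
    Fintype.card (VA ⊕ VB) % 6 = 0 ∧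
    ¬ ∃ P, IsFactor (edgeGlue A B a1 a2 b1 b2) P := by
  classical
  have nA_two : ∀ (x x' : VA) (y : VB), x ≠ x' →
      (({Sum.inl x, Sum.inl x', Sum.inr y} : Finset (VA⊕VB)).filter
        (fun v => v.isLeft = true)).card = 2 := by
    intro x x' y h
    rw [Finset.filter_insert, Finset.filter_insert, Finset.filter_singleton]
    simp [h]
  have nA_one : ∀ (y y' : VB) (x : VA),
      (({Sum.inr y, Sum.inr y', Sum.inl x} : Finset (VA⊕VB)).filter
        (fun v => v.isLeft = true)).card = 1 := by
    intro y y' x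
    rw [Finset.filter_insert, Finset.filter_insert, Finset.filter_singleton]
    simp
  refine ⟨by rw [Fintype.card_sum]; omega, ?_⟩
  rintro ⟨P, hfac⟩
  obtain ⟨⟨hpath, hdisj⟩, -, hcov⟩ := id hfac
  set fV : ((VA⊕VB) × (VA⊕VB) × (VA⊕VB)) → Finset (VA ⊕ VB) :=
    fun p => {p.1, p.2.1, p.2.2} with hfVdef
  have hmemV : ∀ (p) (v : VA⊕VB), v ∈ fV p ↔ v ∈ pVerts p := by
    intro p v; simp [fV, pVerts]
  have hcoe : ∀ p, (↑(fV p) : Set (VA⊕VB)) = pVerts p := by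
    intro p; simp [fV, pVerts]
  have hFeq : ∀ (p) (u v w : VA⊕VB), pVerts p = {u, v, w} → fV p = {u, v, w} := by
    intro p u v w h
    apply Finset.coe_injective
    rw [hcoe, h]; simp
  have hdisjF : ∀ p ∈ P, ∀ q ∈ P, p ≠ q → Disjoint (fV p) (fV q) := by
    intro p hp q hq hne
    rw [Finset.disjoint_left]
    intro v hv hv'
    exact Set.disjoint_left.mp (hdisj p hp q hq hne) ((hmemV p v).mp hv) ((hmemV q v).mp hv')
  have huniq : ∀ (v : VA⊕VB), ∀ p ∈ P, ∀ q ∈ P, v ∈ pVerts p → v ∈ pVerts q → p = q := by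
    intro v p hp q hq hvp hvq
    by_contra hne
    exact Set.disjoint_left.mp (hdisj p hp q hq hne) hvp hvq
  have hcard3 : ∀ p ∈ P, (fV p).card = 3 := by
    intro p hp
    obtain ⟨h1, h2, h3, -, -⟩ := hpath p hp
    show ({p.1, p.2.1, p.2.2} : Finset _).card = 3
    rw [Finset.card_insert_of_notMem (by simp [h1, h3]),
      Finset.card_insert_of_notMem (by simp [h2]), Finset.card_singleton]
  set nA : ((VA⊕VB) × (VA⊕VB) × (VA⊕VB)) → ℕ :=
    fun p => ((fV p).filter (fun v => v.isLeft = true)).card with hnAdef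
  -- total count of left vertices
  have himg : (Finset.univ.image (Sum.inl : VA → VA ⊕ VB)) =
      P.biUnion (fun p => (fV p).filter (fun v => v.isLeft = true)) := by
    ext v
    simp only [Finset.mem_image, Finset.mem_biUnion, Finset.mem_filter, Finset.mem_univ, true_and]
    constructor
    · rintro ⟨x, rfl⟩
      obtain ⟨p, hp, hv⟩ := hcov (Sum.inl x) trivial
      exact ⟨p, hp, (hmemV p _).mpr hv, rfl⟩
    · rintro ⟨p, hp, hv, hL⟩
      obtain ⟨x, rfl⟩ := Sum.isLeft_iff.mp hL
      exact ⟨x, rfl⟩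
  have hsum : Fintype.card VA = ∑ p ∈ P, nA p := by
    calc Fintype.card VA = (Finset.univ.image (Sum.inl : VA → VA⊕VB)).card := by
          rw [Finset.card_image_of_injective _ Sum.inl_injective, Finset.card_univ]
      _ = ∑ p ∈ P, nA p := by
          rw [himg, Finset.card_biUnion]
          intro p hp q hq hne
          exact Finset.disjoint_filter_filter (hdisjF p hp q hq hne)
  set C : Finset ((VA⊕VB) × (VA⊕VB) × (VA⊕VB)) :=
    P.filter (fun p => ¬ pureL p ∧ ¬ pureR p) with hCdef
  have hsplit := Finset.sum_filter_add_sum_filter_not P (fun p => ¬ pureL p ∧ ¬ pureR p) nA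
  have hdvd_rest : 3 ∣ ∑ p ∈ P.filter (fun p => ¬(¬ pureL p ∧ ¬ pureR p)), nA p := by
    refine Finset.dvd_sum ?_
    intro p hp
    obtain ⟨hpP, hpn⟩ := Finset.mem_filter.mp hp
    by_cases hl : pureL p
    · have h3 : nA p = 3 := by
        show ((fV p).filter (fun v => v.isLeft = true)).card = 3
        rw [Finset.filter_true_of_mem, hcard3 p hpP]
        intro v hv
        obtain ⟨w, rfl⟩ := hl v ((hmemV p v).mp hv); rfl
      simp [h3]
    · have hr' : pureR p := by tauto
      have h0 : nA p = 0 := by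
        show ((fV p).filter (fun v => v.isLeft = true)).card = 0
        rw [Finset.card_eq_zero, Finset.filter_eq_empty_iff]
        intro v hv
        obtain ⟨w, rfl⟩ := hr' v ((hmemV p v).mp hv); simp
      simp [h0]
  have hdvdC : 3 ∣ ∑ p ∈ C, nA p := by
    have h3A : 3 ∣ Fintype.card VA := Nat.dvd_of_mod_eq_zero (by omega)
    rw [hsum, ← hsplit] at h3A
    rw [hCdef]
    rw [Nat.add_comm] at h3A
    exact (Nat.dvd_add_right hdvd_rest).mp h3A
  -- structure of crossing paths
  have hstruct : ∀ p ∈ C,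
      (∃ x, (A.deleteEdges {s(a1,a2)}).Adj x a1 ∧ pVerts p = {Sum.inl x, Sum.inl a1, Sum.inr b1}) ∨
      (∃ x, (A.deleteEdges {s(a1,a2)}).Adj x a2 ∧ pVerts p = {Sum.inl x, Sum.inl a2, Sum.inr b2}) ∨
      (∃ y, (B.deleteEdges {s(b1,b2)}).Adj y b1 ∧ pVerts p = {Sum.inr y, Sum.inr b1, Sum.inl a1}) ∨
      (∃ y, (B.deleteEdges {s(b1,b2)}).Adj y b2 ∧ pVerts p = {Sum.inr y, Sum.inr b2, Sum.inl a2}) := by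
    intro p hp
    obtain ⟨hpP, hnl, hnr⟩ := Finset.mem_filter.mp hp
    exact cross_struct ha hb p (hpath p hpP) hnl hnr
  have haorb : ∀ p ∈ C, Sum.inl a1 ∈ pVerts p ∨ Sum.inl a2 ∈ pVerts p := by
    intro p hp
    rcases hstruct p hp with ⟨x, -, h⟩ | ⟨x, -, h⟩ | ⟨y, -, h⟩ | ⟨y, -, h⟩ <;>
      rw [h] <;> simp [Set.mem_insert_iff]
  have hnAC : ∀ p ∈ C, nA p = 1 ∨ nA p = 2 := by
    intro p hp
    rcases hstruct p hp with ⟨x, hx, h⟩ | ⟨x, hx, h⟩ | ⟨y, hy, h⟩ | ⟨y, hy, h⟩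
    · refine Or.inr ?_
      show ((fV p).filter (fun v => v.isLeft = true)).card = 2
      rw [hFeq p _ _ _ h]; exact nA_two _ _ _ hx.ne
    · refine Or.inr ?_
      show ((fV p).filter (fun v => v.isLeft = true)).card = 2
      rw [hFeq p _ _ _ h]; exact nA_two _ _ _ hx.ne
    · refine Or.inl ?_
      show ((fV p).filter (fun v => v.isLeft = true)).card = 1
      rw [hFeq p _ _ _ h]; exact nA_one _ _ _
    · refine Or.inl ?_
      show ((fV p).filter (fun v => v.isLeft = true)).card = 1
      rw [hFeq p _ _ _ h]; exact nA_one _ _ _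
  have hCsub : ∀ p ∈ C, p ∈ P := fun p hp => (Finset.mem_filter.mp hp).1
  have hC2 : C.card ≤ 2 := by
    have h := Finset.card_le_card_of_injOn
      (f := fun p => (decide (Sum.inl a1 ∈ pVerts p) : Bool))
      (s := C) (t := Finset.univ) (fun p _ => Finset.mem_univ _) ?_
    · simpa using h
    · intro p hp q hq hpq
      simp only [Finset.mem_coe] at hp hq
      have hiff := decide_eq_decide.mp hpq
      by_cases h1 : Sum.inl a1 ∈ pVerts p
      · exact huniq _ p (hCsub p hp) q (hCsub q hq) h1 (hiff.mp h1)
      · have h2 : Sum.inl a2 ∈ pVerts p := (haorb p hp).resolve_left h1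
        have h2' : Sum.inl a2 ∈ pVerts q := (haorb q hq).resolve_left (fun h => h1 (hiff.mpr h))
        exact huniq _ p (hCsub p hp) q (hCsub q hq) h2 h2'
  have hcases : C.card = 0 ∨ C.card = 1 ∨ C.card = 2 := by omega
  rcases hcases with h0 | h1 | h2
  · -- no crossing paths: extract a factor of B avoiding b
    have hCe : C = ∅ := Finset.card_eq_zero.mp h0
    have hall : ∀ p ∈ P, pureL p ∨ pureR p := by
      intro p hp
      by_contra hcon
      push_neg at hcon
      have : p ∈ C := Finset.mem_filter.mpr ⟨hp, hcon.1, hcon.2⟩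
      rw [hCe] at this; simp at this
    obtain ⟨Q, hQ, hN⟩ := extractB P hfac hall
    exact hN (hB Q hQ)
  · -- one crossing path: contradicts divisibility
    obtain ⟨p0, hC⟩ := Finset.card_eq_one.mp h1
    have hp0 : p0 ∈ C := by rw [hC]; simp
    have : ∑ p ∈ C, nA p = nA p0 := by rw [hC, Finset.sum_singleton]
    rcases hnAC p0 hp0 with h | h <;> rw [this, h] at hdvdC <;> omega
  · -- two crossing paths
    obtain ⟨p0, q0, hne, hC⟩ := Finset.card_eq_two.mp h2
    have hp0 : p0 ∈ C := by rw [hC]; simp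
    have hq0 : q0 ∈ C := by rw [hC]; simp
    have hp0P := hCsub p0 hp0
    have hq0P := hCsub q0 hq0
    have hsumC : ∑ p ∈ C, nA p = nA p0 + nA q0 := by rw [hC, Finset.sum_pair hne]
    rw [hsumC] at hdvdC
    have hCr : ∀ p ∈ P, ¬ pureL p → ¬ pureR p → p = p0 ∨ p = q0 := by
      intro p hp hnl hnr
      have : p ∈ C := Finset.mem_filter.mpr ⟨hp, hnl, hnr⟩
      rw [hC] at this; simpa using this
    have hCr' : ∀ p ∈ P, ¬ pureL p → ¬ pureR p → p = q0 ∨ p = p0 := by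
      intro p hp hnl hnr; exact (hCr p hp hnl hnr).symm
    have hswA : ({s(a2,a1)} : Set (Sym2 VA)) = {s(a1,a2)} := by rw [Sym2.eq_swap]
    have hfac' : IsFactor (edgeGlue A B a2 a1 b2 b1) P := by
      rw [glue_swap]; exact hfac
    have hnlp0 : ¬ pureL p0 := (Finset.mem_filter.mp hp0).2.1
    have hnlq0 : ¬ pureL q0 := (Finset.mem_filter.mp hq0).2.1
    rcases hstruct p0 hp0 with ⟨x, hx, hvp⟩ | ⟨x, hx, hvp⟩ | ⟨y, hy, hvp⟩ | ⟨y, hy, hvp⟩ <;>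
      rcases hstruct q0 hq0 with ⟨x', hx', hvq⟩ | ⟨x', hx', hvq⟩ | ⟨y', hy', hvq⟩ | ⟨y', hy', hvq⟩
    · -- (1,1) share a1
      exact hne (huniq (Sum.inl a1) p0 hp0P q0 hq0P (by rw [hvp]; simp) (by rw [hvq]; simp))
    · -- (1,2) sum 4
      have n1 : nA p0 = 2 := by
        show ((fV p0).filter (fun v => v.isLeft = true)).card = 2
        rw [hFeq p0 _ _ _ hvp]; exact nA_two _ _ _ hx.ne
      have n2 : nA q0 = 2 := by
        show ((fV q0).filter (fun v => v.isLeft = true)).card = 2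
        rw [hFeq q0 _ _ _ hvq]; exact nA_two _ _ _ hx'.ne
      omega
    · -- (1,3) share a1
      exact hne (huniq (Sum.inl a1) p0 hp0P q0 hq0P (by rw [hvp]; simp) (by rw [hvq]; simp))
    · -- (1,4) key
      obtain ⟨Q, h1, h2⟩ := keyA ha P hfac p0 q0 hp0P hq0P hCr x hx hvp
        (by rw [hvq]; simp)
        (by intro v hv; rw [hvq] at hv; simpa using hv) hnlq0
      exact hA ⟨Q, h1, h2⟩
    · -- (2,1) sum 4
      have n1 : nA p0 = 2 := by
        show ((fV p0).filter (fun v => v.isLeft = true)).card = 2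
        rw [hFeq p0 _ _ _ hvp]; exact nA_two _ _ _ hx.ne
      have n2 : nA q0 = 2 := by
        show ((fV q0).filter (fun v => v.isLeft = true)).card = 2
        rw [hFeq q0 _ _ _ hvq]; exact nA_two _ _ _ hx'.ne
      omega
    · -- (2,2) share a2
      exact hne (huniq (Sum.inl a2) p0 hp0P q0 hq0P (by rw [hvp]; simp) (by rw [hvq]; simp))
    · -- (2,3) key swapped indices, r = p0, s = q0
      obtain ⟨Q, h1, h2⟩ := keyA (a1 := a2) (a2 := a1) (b1 := b2) (b2 := b1)
        ha.symm P hfac' p0 q0 hp0P hq0P hCr x (by rw [hswA]; exact hx) hvp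
        (by rw [hvq]; simp)
        (by intro v hv; rw [hvq] at hv; simpa using hv) hnlq0
      exact hA ⟨Q, h1, by rwa [Sym2.eq_swap] at h2⟩
    · -- (2,4) share a2
      exact hne (huniq (Sum.inl a2) p0 hp0P q0 hq0P (by rw [hvp]; simp) (by rw [hvq]; simp))
    · -- (3,1) share a1
      exact hne (huniq (Sum.inl a1) p0 hp0P q0 hq0P (by rw [hvp]; simp) (by rw [hvq]; simp))
    · -- (3,2) key swapped indices, r = q0, s = p0
      obtain ⟨Q, h1, h2⟩ := keyA (a1 := a2) (a2 := a1) (b1 := b2) (b2 := b1)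
        ha.symm P hfac' q0 p0 hq0P hp0P hCr' x' (by rw [hswA]; exact hx') hvq
        (by rw [hvp]; simp)
        (by intro v hv; rw [hvp] at hv; simpa using hv) hnlp0
      exact hA ⟨Q, h1, by rwa [Sym2.eq_swap] at h2⟩
    · -- (3,3) share a1
      exact hne (huniq (Sum.inl a1) p0 hp0P q0 hq0P (by rw [hvp]; simp) (by rw [hvq]; simp))
    · -- (3,4) sum 2
      have n1 : nA p0 = 1 := by
        show ((fV p0).filter (fun v => v.isLeft = true)).card = 1
        rw [hFeq p0 _ _ _ hvp]; exact nA_one _ _ _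
      have n2 : nA q0 = 1 := by
        show ((fV q0).filter (fun v => v.isLeft = true)).card = 1
        rw [hFeq q0 _ _ _ hvq]; exact nA_one _ _ _
      omega
    · -- (4,1) key, r = q0, s = p0
      obtain ⟨Q, h1, h2⟩ := keyA ha P hfac q0 p0 hq0P hp0P hCr' x' hx' hvq
        (by rw [hvp]; simp)
        (by intro v hv; rw [hvp] at hv; simpa using hv) hnlp0
      exact hA ⟨Q, h1, h2⟩
    · -- (4,2) share a2
      exact hne (huniq (Sum.inl a2) p0 hp0P q0 hq0P (by rw [hvp]; simp) (by rw [hvq]; simp))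
    · -- (4,3) sum 2
      have n1 : nA p0 = 1 := by
        show ((fV p0).filter (fun v => v.isLeft = true)).card = 1
        rw [hFeq p0 _ _ _ hvp]; exact nA_one _ _ _
      have n2 : nA q0 = 1 := by
        show ((fV q0).filter (fun v => v.isLeft = true)).card = 1
        rw [hFeq q0 _ _ _ hvq]; exact nA_one _ _ _
      omega
    · -- (4,4) share a2
      exact hne (huniq (Sum.inl a2) p0 hp0P q0 hq0P (by rw [hvp]; simp) (by rw [hvq]; simp))
end
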